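/- arXiv:2305.05820 — 3 statements merged into one kernel-verified Lean document; each statement's English description precedes it below -/
import Mathlib

section
/- Let α > 0 and β > 0 be real numbers with β < α + 3/2. For each integer n ≥ 2 set m = ⌈n^α⌉ and k = ⌈β·log₂ n⌉. Then liminf_{n→∞} Pr( there exist indices i < j and positions a < b and c with c + (b − a) ≤ n − k + 1, x_i(a) = x_j(c), and x_i(b) = x_j(c + b − a) ) ≥ 4^{−7}. -/
/-- The symbol of `x` at (0-indexed) position `t`, with junk value `false` out of range. -/
def get {n : ℕ} (x : Fin n → Bool) (t : ℕ) : Bool :=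
  if h : t < n then x ⟨t, h⟩ else false

/-- The `k`-mer of `x` starting at (0-indexed) position `a`. -/
def kmer {n : ℕ} (k : ℕ) (x : Fin n → Bool) (a : ℕ) : Fin k → Bool :=
  fun t => get x (a + t.val)

/-- Event H: two strings `x_i`, `x_j` (`i < j`) have two shared `k`-mers with equal gaps:
`x_i(a) = x_j(c)` and `x_i(b) = x_j(c + b - a)` for positions `a < b` (0-indexed). -/
def eventH {n : ℕ} (m k : ℕ) (X : Fin m → Fin n → Bool) : Prop :=
  ∃ i j : Fin m, i < j ∧ ∃ a b c : ℕ,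
    a < b ∧ a + k ≤ n ∧ b + k ≤ n ∧ c + k ≤ n ∧ c + (b - a) + k ≤ n ∧
    kmer k (X i) a = kmer k (X j) c ∧
    kmer k (X i) b = kmer k (X j) (c + (b - a))

/-- Probability of an event under the uniform distribution on a finite sample space. -/
noncomputable def prob {Ω : Type*} [Fintype Ω] (p : Ω → Prop) : ℝ :=
  (Nat.card {ω // p ω} : ℝ) / (Fintype.card Ω : ℝ)

lemma count_pin {m n : ℕ} {I : Type} [Fintype I] [DecidableEq I]
    (ι τ : I → Fin m × Fin n) (hι : Function.Injective ι)
    (hτ : ∀ i j, τ i ≠ ι j) :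
    Nat.card {X : Fin m → Fin n → Bool //
        ∀ i, X (ι i).1 (ι i).2 = X (τ i).1 (τ i).2}
      = 2 ^ (m * n - Fintype.card I) := by
  classical
  have hnotr : ∀ i, ¬ ∃ j, ι j = τ i := by
    rintro i ⟨j, hj⟩; exact hτ i j hj.symm
  let e : {X : Fin m → Fin n → Bool //
        ∀ i, X (ι i).1 (ι i).2 = X (τ i).1 (τ i).2}
      ≃ ({c : Fin m × Fin n // c ∉ Set.range ι} → Bool) :=
  { toFun := fun X c => X.1 c.1.1 c.1.2
    invFun := fun Y =>
      ⟨fun a b =>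
        if h : ∃ j, ι j = (a, b) then
          Y ⟨τ h.choose, fun hc => hnotr h.choose hc⟩
        else Y ⟨(a, b), fun hc => h (by rcases hc with ⟨j, hj⟩; exact ⟨j, hj⟩)⟩,
       by
        intro i
        have h1 : ∃ j, ι j = ((ι i).1, (ι i).2) := ⟨i, by simp⟩
        have h2 : ¬ ∃ j, ι j = ((τ i).1, (τ i).2) := by
          simpa using hnotr i
        simp only [dif_pos h1, dif_neg h2]
        have : h1.choose = i := hι (by simpa using h1.choose_spec)
        congr 1 <;> simp [this]⟩
    left_inv := by
      rintro ⟨X, hX⟩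
      ext a b
      simp only []
      by_cases h : ∃ j, ι j = (a, b)
      · rw [dif_pos h]
        have := hX h.choose
        rw [h.choose_spec] at this
        exact this.symm
      · rw [dif_neg h]
    right_inv := by
      intro Y
      ext ⟨⟨a, b⟩, hc⟩
      have h : ¬ ∃ j, ι j = (a, b) := by
        rintro ⟨j, hj⟩; exact hc ⟨j, hj⟩
      simp only [dif_neg h] }
  rw [Nat.card_congr e, Nat.card_eq_fintype_card, Fintype.card_fun, Fintype.card_bool]
  congr 1
  have : Fintype.card {c : Fin m × Fin n // c ∉ Set.range ι} =
      Fintype.card (Fin m × Fin n) - Fintype.card {c : Fin m × Fin n // c ∈ Set.range ι} := by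
    simpa using Fintype.card_subtype_compl (fun c : Fin m × Fin n => c ∈ Set.range ι)
  rw [this]
  congr 1
  · simp [Fintype.card_prod]
  · exact Set.card_range_of_injective hι

section blocks
variable {m n R B K : ℕ}

def bpos (hn : B*K ≤ n) (s : Fin B) (u : Fin K) : Fin n :=
  ⟨s.1*K+u.1, by
    have h1 : (s.1+1)*K ≤ B*K := Nat.mul_le_mul_right _ s.isLt
    have h2 := u.isLt
    rw [add_mul] at h1; omega⟩

lemma bpos_inj (hn : B*K ≤ n) {s s' : Fin B} {u u' : Fin K}
    (h : bpos hn s u = bpos hn s' u') : s = s' ∧ u = u' := by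
  have hv := congrArg Fin.val h
  simp only [bpos] at hv
  have hst : s.1 = s'.1 := by
    rcases Nat.lt_trichotomy s.1 s'.1 with h' | h' | h'
    · have := Nat.mul_le_mul_right K h'
      rw [Nat.succ_mul] at this
      have := u.isLt; omega
    · exact h'
    · have := Nat.mul_le_mul_right K h'
      rw [Nat.succ_mul] at this
      have := u'.isLt; omega
  have hu : u.1 = u'.1 := by rw [hst] at hv; omega
  exact ⟨Fin.ext hst, Fin.ext hu⟩

/-- The block-match event. -/
def Ablk (K : ℕ) (iE iO : Fin R → Fin m)
    (e : Fin R × Fin B × Fin B) (X : Fin m → Fin n → Bool) : Prop :=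
  kmer K (X (iO e.1)) (e.2.2.1*K) = kmer K (X (iE e.1)) (e.2.1.1*K)

lemma Ablk_iff (iE iO : Fin R → Fin m) (hn : B*K ≤ n)
    (e : Fin R × Fin B × Fin B) (X : Fin m → Fin n → Bool) :
    Ablk K iE iO e X ↔
      ∀ u : Fin K, X (iO e.1) (bpos hn e.2.2 u) = X (iE e.1) (bpos hn e.2.1 u) := by
  unfold Ablk kmer _root_.get bpos
  rw [funext_iff]
  apply forall_congr'
  intro u
  rw [dif_pos (show e.2.2.1*K+u.1 < n from (bpos hn e.2.2 u).isLt),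
    dif_pos (show e.2.1.1*K+u.1 < n from (bpos hn e.2.1 u).isLt)]

lemma card_Ablk (iE iO : Fin R → Fin m)
    (hd : ∀ r r', iE r ≠ iO r') (hn : B*K ≤ n) (e : Fin R × Fin B × Fin B) :
    Nat.card {X : Fin m → Fin n → Bool // Ablk K iE iO e X} = 2^(m*n - K) := by
  have key := count_pin
    (fun u : Fin K => ((iO e.1 : Fin m), bpos hn e.2.2 u))
    (fun u : Fin K => ((iE e.1 : Fin m), bpos hn e.2.1 u))
    (fun u v h => by
      have h2 := congrArg Prod.snd h
      exact (bpos_inj hn h2).2)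
    (fun i j h => hd e.1 e.1 (congrArg Prod.fst h))
  rw [Fintype.card_fin] at key
  rw [← key]
  exact Nat.card_congr (Equiv.subtypeEquivRight (fun X => Ablk_iff iE iO hn e X))

lemma card_pair (iE iO : Fin R → Fin m)
    (hd : ∀ r r', iE r ≠ iO r')
    (hEi : Function.Injective iE) (hOi : Function.Injective iO)
    (hn : B*K ≤ n) {e e' : Fin R × Fin B × Fin B} (hne : e ≠ e') :
    Nat.card {X : Fin m → Fin n → Bool // Ablk K iE iO e X ∧ Ablk K iE iO e' X}
      = 2^(m*n - 2*K) := by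
  classical
  obtain ⟨r, s, t⟩ := e
  obtain ⟨r', s', t'⟩ := e'
  by_cases hrt : r = r' ∧ t = t'
  · obtain ⟨hr, ht⟩ := hrt
    subst hr; subst ht
    have hss : s ≠ s' := by
      intro hs; exact hne (by rw [hs])
    have key := count_pin (I := Fin K ⊕ Fin K)
      (fun i => Sum.elim
        (fun u => ((iE r : Fin m), bpos hn s u))
        (fun u => ((iE r : Fin m), bpos hn s' u)) i)
      (fun i => Sum.elim
        (fun u => ((iO r : Fin m), bpos hn t u))
        (fun u => ((iO r : Fin m), bpos hn t u)) i)
      (by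
        rintro (u | u) (v | v) h <;>
          simp only [Sum.elim_inl, Sum.elim_inr, Prod.mk.injEq] at h
        · rw [(bpos_inj hn h.2).2]
        · exact absurd (bpos_inj hn h.2).1 hss
        · exact absurd (bpos_inj hn h.2).1 (Ne.symm hss)
        · rw [(bpos_inj hn h.2).2])
      (by
        rintro (u | u) (v | v) h <;>
          simp only [Sum.elim_inl, Sum.elim_inr, Prod.mk.injEq] at h <;>
          exact hd r r (h.1.symm))
    simp only [Fintype.card_sum, Fintype.card_fin] at key
    have hkk : m*n - (K + K) = m*n - 2*K := by rw [two_mul]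
    rw [hkk] at key
    rw [← key]
    apply Nat.card_congr
    apply Equiv.subtypeEquivRight
    intro X
    rw [Ablk_iff iE iO hn (r, s, t) X, Ablk_iff iE iO hn (r, s', t) X, Sum.forall]
    simp only [Sum.elim_inl, Sum.elim_inr]
    constructor
    · rintro ⟨h1, h2⟩
      exact ⟨fun u => (h1 u).symm, fun u => (h2 u).symm⟩
    · rintro ⟨h1, h2⟩
      exact ⟨fun u => (h1 u).symm, fun u => (h2 u).symm⟩
  · have key := count_pin (I := Fin K ⊕ Fin K)
      (fun i => Sum.elim
        (fun u => ((iO r : Fin m), bpos hn t u))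
        (fun u => ((iO r' : Fin m), bpos hn t' u)) i)
      (fun i => Sum.elim
        (fun u => ((iE r : Fin m), bpos hn s u))
        (fun u => ((iE r' : Fin m), bpos hn s' u)) i)
      (by
        rintro (u | u) (v | v) h <;>
          simp only [Sum.elim_inl, Sum.elim_inr, Prod.mk.injEq] at h
        · rw [(bpos_inj hn h.2).2]
        · exact absurd ⟨hOi h.1, (bpos_inj hn h.2).1⟩ hrt
        · exact absurd ⟨(hOi h.1).symm, (bpos_inj hn h.2).1.symm⟩ hrt
        · rw [(bpos_inj hn h.2).2])
      (by
        rintro (u | u) (v | v) h <;>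
          simp only [Sum.elim_inl, Sum.elim_inr, Prod.mk.injEq] at h
        · exact hd r r h.1
        · exact hd r r' h.1
        · exact hd r' r h.1
        · exact hd r' r' h.1)
    simp only [Fintype.card_sum, Fintype.card_fin] at key
    have hkk : m*n - (K + K) = m*n - 2*K := by rw [two_mul]
    rw [hkk] at key
    rw [← key]
    apply Nat.card_congr
    apply Equiv.subtypeEquivRight
    intro X
    rw [Ablk_iff iE iO hn (r, s, t) X, Ablk_iff iE iO hn (r', s', t') X, Sum.forall]
    simp only [Sum.elim_inl, Sum.elim_inr]

end blocks

lemma Ablk_eventH {m n R B k : ℕ} (iE iO : Fin R → Fin m)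
    (hEO : ∀ r, iE r < iO r) (hn : B*(k+1) ≤ n)
    {e : Fin R × Fin B × Fin B} {X : Fin m → Fin n → Bool}
    (hA : Ablk (k+1) iE iO e X) : eventH m k X := by
  obtain ⟨r, s, t⟩ := e
  have hsK : s.1*(k+1) + (k+1) ≤ n := by
    have h1 := Nat.mul_le_mul_right (k+1) s.isLt
    rw [Nat.succ_mul] at h1
    omega
  have htK : t.1*(k+1) + (k+1) ≤ n := by
    have h1 := Nat.mul_le_mul_right (k+1) t.isLt
    rw [Nat.succ_mul] at h1
    omega
  refine ⟨iE r, iO r, hEO r, s.1*(k+1), s.1*(k+1)+1, t.1*(k+1),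
    by omega, by omega, by omega, by omega, by omega, ?_, ?_⟩
  · funext v
    have hv : v.1 < k + 1 := by omega
    have := congrFun hA ⟨v.1, hv⟩
    exact this.symm
  · have h1 : s.1*(k+1)+1 - s.1*(k+1) = 1 := by omega
    rw [h1]
    funext v
    have hv : v.1 + 1 < k + 1 := by omega
    have h2 := congrFun hA ⟨v.1 + 1, hv⟩
    show get (X (iE r)) (s.1*(k+1)+1+v.1) = get (X (iO r)) (t.1*(k+1)+1+v.1)
    rw [show s.1*(k+1)+1+v.1 = s.1*(k+1)+(v.1+1) by omega,
      show t.1*(k+1)+1+v.1 = t.1*(k+1)+(v.1+1) by omega]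
    exact h2.symm

lemma half_le_prob {m n k R B : ℕ} (iE iO : Fin R → Fin m)
    (hEO : ∀ r, iE r < iO r)
    (hd : ∀ r r', iE r ≠ iO r')
    (hEi : Function.Injective iE) (hOi : Function.Injective iO)
    (hn : B*(k+1) ≤ n)
    (hS : (2:ℝ)^(k+1) ≤ (R:ℝ) * (B:ℝ)^2) :
    (1:ℝ)/2 ≤ prob (fun X : Fin m → Fin n → Bool => eventH m k X) := by
  classical
  set K := k + 1 with hKdef
  have hP2 : (2:ℝ) ≤ (2:ℝ)^K := by
    calc (2:ℝ) = 2^1 := (pow_one 2).symm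
    _ ≤ 2^K := pow_le_pow_right₀ one_le_two (by omega)
  have hR1 : 1 ≤ R := by
    rcases Nat.eq_zero_or_pos R with h0 | h0
    · exfalso; rw [h0] at hS; norm_num at hS; nlinarith
    · exact h0
  have hB1 : 1 ≤ B := by
    rcases Nat.eq_zero_or_pos B with h0 | h0
    · exfalso; rw [h0] at hS; norm_num at hS; nlinarith
    · exact h0
  have hm2 : 2 ≤ m := by
    have h1 := (iO ⟨0, hR1⟩).isLt
    have h2 := hEO ⟨0, hR1⟩
    have h3 : (iE ⟨0, hR1⟩).1 < (iO ⟨0, hR1⟩).1 := h2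
    omega
  have hKn : K ≤ n := le_trans (Nat.le_mul_of_pos_left K hB1) hn
  have h2Kmn : 2*K ≤ m*n := by
    have : 2*K ≤ 2*n := by omega
    have h2 : 2*n ≤ m*n := Nat.mul_le_mul_right n hm2
    omega
  -- the family of events
  set E := Fin R × Fin B × Fin B with hE
  set A : E → (Fin m → Fin n → Bool) → Prop := Ablk K iE iO with hA
  set N : (Fin m → Fin n → Bool) → ℕ :=
    fun X => (Finset.univ.filter fun e : E => A e X).card with hN
  set T : ℕ := Fintype.card E with hT
  have hTval : T = R * (B * B) := by simp [hT, hE]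
  -- counting: single events
  have hone : ∀ e : E, (Finset.univ.filter fun X : Fin m → Fin n → Bool => A e X).card
      = 2^(m*n - K) := by
    intro e
    rw [← Fintype.card_subtype, ← Nat.card_eq_fintype_card]
    exact card_Ablk iE iO hd hn e
  have hpair : ∀ e e' : E, e ≠ e' →
      (Finset.univ.filter fun X : Fin m → Fin n → Bool => A e X ∧ A e' X).card
      = 2^(m*n - 2*K) := by
    intro e e' hne
    rw [← Fintype.card_subtype, ← Nat.card_eq_fintype_card]
    exact card_pair iE iO hd hEi hOi hn hne
  -- first moment
  have hsum1 : ∑ X : Fin m → Fin n → Bool, N X = T * 2^(m*n - K) := by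
    have hNe : ∀ X, N X = ∑ e : E, if A e X then 1 else 0 := by
      intro X; simp only [hN]; rw [Finset.card_filter]
    calc ∑ X : Fin m → Fin n → Bool, N X
        = ∑ X : Fin m → Fin n → Bool, ∑ e : E, if A e X then 1 else 0 := by
          exact Finset.sum_congr rfl fun X _ => hNe X
      _ = ∑ e : E, ∑ X : Fin m → Fin n → Bool, if A e X then 1 else 0 :=
          Finset.sum_comm
      _ = ∑ e : E, (Finset.univ.filter fun X : Fin m → Fin n → Bool => A e X).card := by
          exact Finset.sum_congr rfl fun e _ => (Finset.card_filter _ _).symm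
      _ = ∑ _e : E, 2^(m*n - K) := Finset.sum_congr rfl fun e _ => hone e
      _ = T * 2^(m*n - K) := by
          rw [Finset.sum_const, Finset.card_univ, smul_eq_mul]
  -- second moment
  have hsum2 : ∑ X : Fin m → Fin n → Bool, (N X)^2
      ≤ T * 2^(m*n - K) + T^2 * 2^(m*n - 2*K) := by
    have hNsq : ∀ X, (N X)^2 = ∑ e : E, ∑ e' : E, if A e X ∧ A e' X then 1 else 0 := by
      intro X
      rw [sq]; simp only [hN]; rw [Finset.card_filter, Finset.sum_mul_sum]
      refine Finset.sum_congr rfl fun e _ => Finset.sum_congr rfl fun e' _ => ?_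
      by_cases h1 : A e X <;> by_cases h2 : A e' X <;> simp [h1, h2]
    have hswap : ∑ X : Fin m → Fin n → Bool, (N X)^2
        = ∑ e : E, ∑ e' : E,
            (Finset.univ.filter fun X : Fin m → Fin n → Bool => A e X ∧ A e' X).card := by
      calc ∑ X : Fin m → Fin n → Bool, (N X)^2
          = ∑ X : Fin m → Fin n → Bool, ∑ e : E, ∑ e' : E,
              if A e X ∧ A e' X then 1 else 0 :=
            Finset.sum_congr rfl fun X _ => hNsq X
        _ = ∑ e : E, ∑ X : Fin m → Fin n → Bool, ∑ e' : E,
              if A e X ∧ A e' X then 1 else 0 := Finset.sum_comm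
        _ = ∑ e : E, ∑ e' : E, ∑ X : Fin m → Fin n → Bool,
              if A e X ∧ A e' X then 1 else 0 :=
            Finset.sum_congr rfl fun e _ => Finset.sum_comm
        _ = _ := Finset.sum_congr rfl fun e _ => Finset.sum_congr rfl fun e' _ =>
            (Finset.card_filter _ _).symm
    rw [hswap]
    have inner : ∀ e : E, ∑ e' : E,
        (Finset.univ.filter fun X : Fin m → Fin n → Bool => A e X ∧ A e' X).card
        ≤ 2^(m*n - K) + T * 2^(m*n - 2*K) := by
      intro e
      rw [← Finset.add_sum_erase _ _ (Finset.mem_univ e)]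
      refine add_le_add (le_of_eq ?_) ?_
      · have : (Finset.univ.filter fun X : Fin m → Fin n → Bool => A e X ∧ A e X)
            = Finset.univ.filter fun X : Fin m → Fin n → Bool => A e X := by
          simp only [and_self]
        rw [this, hone e]
      · calc ∑ e' ∈ Finset.univ.erase e,
              (Finset.univ.filter fun X : Fin m → Fin n → Bool => A e X ∧ A e' X).card
            = ∑ _e' ∈ Finset.univ.erase e, 2^(m*n - 2*K) :=
              Finset.sum_congr rfl fun e' he' =>
                hpair e e' (Ne.symm (Finset.ne_of_mem_erase he'))
          _ = (Finset.univ.erase e).card * 2^(m*n - 2*K) := by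
              rw [Finset.sum_const, smul_eq_mul]
          _ ≤ T * 2^(m*n - 2*K) := by
              apply Nat.mul_le_mul_right
              calc (Finset.univ.erase e).card ≤ Finset.univ.card :=
                    Finset.card_le_card (Finset.erase_subset _ _)
                _ = T := Finset.card_univ
    calc ∑ e : E, ∑ e' : E,
          (Finset.univ.filter fun X : Fin m → Fin n → Bool => A e X ∧ A e' X).card
        ≤ ∑ _e : E, (2^(m*n - K) + T * 2^(m*n - 2*K)) :=
          Finset.sum_le_sum fun e _ => inner e
      _ = T * (2^(m*n - K) + T * 2^(m*n - 2*K)) := by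
          rw [Finset.sum_const, Finset.card_univ, smul_eq_mul]
      _ = T * 2^(m*n - K) + T^2 * 2^(m*n - 2*K) := by ring
  -- Cauchy-Schwarz
  set sup : Finset (Fin m → Fin n → Bool) :=
    Finset.univ.filter fun X => N X ≠ 0 with hsup
  have hCS : (∑ X : Fin m → Fin n → Bool, N X)^2
      ≤ sup.card * ∑ X : Fin m → Fin n → Bool, (N X)^2 := by
    have h1 : ∑ X ∈ sup, N X = ∑ X : Fin m → Fin n → Bool, N X :=
      Finset.sum_filter_ne_zero _
    calc (∑ X : Fin m → Fin n → Bool, N X)^2 = (∑ X ∈ sup, N X)^2 := by rw [h1]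
      _ ≤ sup.card * ∑ X ∈ sup, (N X)^2 := sq_sum_le_card_mul_sum_sq
      _ ≤ sup.card * ∑ X : Fin m → Fin n → Bool, (N X)^2 :=
          Nat.mul_le_mul_left _ (Finset.sum_le_sum_of_subset (Finset.filter_subset _ _))
  -- sup only contains eventH witnesses
  have hsub : sup.card ≤ Nat.card {X : Fin m → Fin n → Bool // eventH m k X} := by
    rw [Nat.card_eq_fintype_card, Fintype.card_subtype]
    apply Finset.card_le_card
    intro X hX
    rw [hsup, Finset.mem_filter] at hX
    rw [Finset.mem_filter]
    refine ⟨Finset.mem_univ _, ?_⟩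
    obtain ⟨-, hX⟩ := hX
    obtain ⟨e, he⟩ := Finset.card_ne_zero.mp hX
    rw [Finset.mem_filter] at he
    exact Ablk_eventH iE iO hEO hn he.2
  -- assemble in ℝ
  have hchain : (T * 2^(m*n - K))^2
      ≤ sup.card * (T * 2^(m*n - K) + T^2 * 2^(m*n - 2*K)) := by
    have := le_trans hCS (Nat.mul_le_mul_left _ hsum2)
    rwa [hsum1] at this
  have hΩ : Fintype.card (Fin m → Fin n → Bool) = 2^(m*n) := by
    rw [Fintype.card_fun, Fintype.card_fun, Fintype.card_bool, Fintype.card_fin,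
      Fintype.card_fin, ← pow_mul, Nat.mul_comm]
  unfold prob
  rw [hΩ]
  rw [le_div_iff₀ (by positivity)]
  push_cast
  set c : ℝ := (sup.card : ℝ) with hc
  set D : ℝ := ((2:ℝ))^(m*n - 2*K) with hD
  have hD0 : 0 < D := by positivity
  have hADr : ((2:ℝ))^(m*n - K) = (2:ℝ)^K * D := by
    rw [hD, ← pow_add]
    congr 1
    omega
  have hMN : ((2:ℝ))^(m*n) = (2:ℝ)^K * ((2:ℝ)^K * D) := by
    rw [hD, ← pow_add, ← pow_add]
    congr 1
    omega
  have hchain' : ((T:ℝ) * ((2:ℝ)^K * D))^2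
      ≤ c * ((T:ℝ) * ((2:ℝ)^K * D) + (T:ℝ)^2 * D) := by
    have := hchain
    have hcast : ((T * 2^(m*n - K))^2 : ℝ)
        ≤ ((sup.card * (T * 2^(m*n - K) + T^2 * 2^(m*n - 2*K))) : ℕ) := by
      exact_mod_cast this
    push_cast at hcast
    rw [hADr] at hcast
    rw [hD] at hcast ⊢
    convert hcast using 2 <;> push_cast <;> ring
  have hTP : (2:ℝ)^K ≤ (T:ℝ) := by
    rw [hTval]
    push_cast
    calc (2:ℝ)^K ≤ (R:ℝ) * (B:ℝ)^2 := hS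
      _ = (R:ℝ) * ((B:ℝ) * (B:ℝ)) := by ring
  set P : ℝ := (2:ℝ)^K with hPd
  have hP0 : 0 < P := by positivity
  have hT0 : (0:ℝ) < T := lt_of_lt_of_le hP0 hTP
  have hc0 : (0:ℝ) ≤ c := Nat.cast_nonneg _
  -- derive: T * P^2 * D ≤ c * (P + T)
  have h1 : T * P^2 * D * (T * D) ≤ c * (P + T) * (T * D) := by
    calc T * P^2 * D * (T * D) = ((T:ℝ) * (P * D))^2 := by ring
      _ ≤ c * ((T:ℝ) * (P * D) + (T:ℝ)^2 * D) := hchain'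
      _ = c * (P + T) * (T * D) := by ring
  have h2 : (T:ℝ) * P^2 * D ≤ c * (P + T) :=
    le_of_mul_le_mul_right h1 (by positivity)
  have h3 : P^2 * D * (P + T) ≤ 2 * c * (P + T) := by
    nlinarith [h2, mul_nonneg (mul_nonneg (sq_nonneg P) hD0.le) (sub_nonneg.mpr hTP)]
  have hPT0 : (0:ℝ) < P + (T:ℝ) := by positivity
  have h4 : P^2 * D ≤ 2 * c := le_of_mul_le_mul_right h3 hPT0
  have hfinal : (2:ℝ)^(m*n) ≤ 2 * c := by
    rw [hMN]
    calc P * (P * D) = P^2 * D := by ring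
      _ ≤ 2 * c := h4
  have hcH : c ≤ (Nat.card {X : Fin m → Fin n → Bool // eventH m k X} : ℝ) := by
    rw [hc]
    exact_mod_cast hsub
  linarith

lemma prob_le_one {Ω : Type*} [Fintype Ω] (p : Ω → Prop) : prob p ≤ 1 := by
  classical
  unfold prob
  rcases isEmpty_or_nonempty Ω with hΩ | hΩ
  · simp [Fintype.card_eq_zero]
  · apply div_le_one_of_le₀
    · have h1 : Nat.card {ω // p ω} = Fintype.card {ω // p ω} := Nat.card_eq_fintype_card
      have h2 : Fintype.card {ω // p ω} ≤ Fintype.card Ω := Fintype.card_subtype_le _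
      exact_mod_cast h1 ▸ h2
    · positivity


set_option maxHeartbeats 1000000

/-- If `β < α + 3/2`, then with `m = ⌈n^α⌉` and `k = ⌈β log₂ n⌉`, the probability
of the equal-gap double repeat event `H` has `liminf` at least `4⁻⁷`. -/
theorem equal_gap_repeat_liminf
    (α β : ℝ) (hα : 0 < α) (hβ : 0 < β) (h : β < α + 3 / 2) :
    (1 : ℝ) / 4 ^ 7 ≤
      Filter.liminf
        (fun n : ℕ =>
          prob (fun X : Fin ⌈(n : ℝ) ^ α⌉₊ → Fin n → Bool =>
            eventH ⌈(n : ℝ) ^ α⌉₊ ⌈β * Real.logb 2 (n : ℝ)⌉₊ X))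
        Filter.atTop := by
  classical
  set Cc : ℝ := β / Real.log 2 + 2 with hCc
  have hlog2 : (0:ℝ) < Real.log 2 := Real.log_pos one_lt_two
  have hCc0 : 0 < Cc := by positivity
  -- eventual real facts
  have hlo := isLittleO_log_rpow_atTop (show (0:ℝ) < 1/8 by norm_num)
  have hb : ∀ᶠ x : ℝ in Filter.atTop, ‖Real.log x‖ ≤ 1 * ‖x ^ ((1:ℝ)/8)‖ :=
    hlo.bound one_pos
  have h14 : ∀ᶠ x : ℝ in Filter.atTop, 64 * Cc^2 ≤ x ^ ((1:ℝ)/4) :=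
    (tendsto_rpow_atTop (by norm_num : (0:ℝ) < 1/4)).eventually_ge_atTop _
  have h78 : ∀ᶠ x : ℝ in Filter.atTop, 2 * Cc ≤ x ^ ((7:ℝ)/8) :=
    (tendsto_rpow_atTop (by norm_num : (0:ℝ) < 7/8)).eventually_ge_atTop _
  have hreal : ∀ᶠ x : ℝ in Filter.atTop,
      64 * (β * Real.logb 2 x + 2)^2 ≤ x ^ ((1:ℝ)/2) ∧
      2 * (β * Real.logb 2 x + 2) ≤ x := by
    filter_upwards [hb, h14, h78, Filter.eventually_ge_atTop (1:ℝ)]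
      with x hbx h14x h78x hx1
    have hx0 : (0:ℝ) < x := by linarith
    have hx18 : (1:ℝ) ≤ x ^ ((1:ℝ)/8) :=
      Real.one_le_rpow hx1 (by norm_num)
    have hlx : Real.log x ≤ x ^ ((1:ℝ)/8) := by
      rw [one_mul] at hbx
      calc Real.log x ≤ ‖Real.log x‖ := le_abs_self _
        _ ≤ ‖x ^ ((1:ℝ)/8)‖ := hbx
        _ = x ^ ((1:ℝ)/8) := abs_of_nonneg (Real.rpow_nonneg hx0.le _)
    have hlogb0 : 0 ≤ Real.logb 2 x := Real.logb_nonneg one_lt_two hx1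
    have hmain : β * Real.logb 2 x + 2 ≤ Cc * x ^ ((1:ℝ)/8) := by
      have h1 : Real.logb 2 x = Real.log x / Real.log 2 := rfl
      have h2 : β * Real.logb 2 x ≤ β / Real.log 2 * x ^ ((1:ℝ)/8) := by
        have hm := mul_le_mul_of_nonneg_left hlx hβ.le
        calc β * Real.logb 2 x = β * Real.log x / Real.log 2 := by rw [h1]; ring
          _ ≤ β * x ^ ((1:ℝ)/8) / Real.log 2 := (div_le_div_iff_of_pos_right hlog2).mpr hm
          _ = β / Real.log 2 * x ^ ((1:ℝ)/8) := by ring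
      have h3 : (2:ℝ) ≤ 2 * x ^ ((1:ℝ)/8) := by nlinarith
      rw [hCc]
      nlinarith
    constructor
    · have hsq : (β * Real.logb 2 x + 2)^2 ≤ (Cc * x ^ ((1:ℝ)/8))^2 := by
        apply pow_le_pow_left₀ (by positivity) hmain
      have hc2 : (Cc * x ^ ((1:ℝ)/8))^2 = Cc^2 * x ^ ((1:ℝ)/4) := by
        rw [mul_pow, ← Real.rpow_natCast (x ^ ((1:ℝ)/8)) 2, ← Real.rpow_mul hx0.le]
        norm_num
      have h48 : 64 * Cc^2 * x ^ ((1:ℝ)/4) ≤ x ^ ((1:ℝ)/4) * x ^ ((1:ℝ)/4) := by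
        apply mul_le_mul_of_nonneg_right h14x (Real.rpow_nonneg hx0.le _)
      have hq : x ^ ((1:ℝ)/4) * x ^ ((1:ℝ)/4) = x ^ ((1:ℝ)/2) := by
        rw [← Real.rpow_add hx0]; norm_num
      nlinarith [Real.rpow_nonneg hx0.le ((1:ℝ)/4)]
    · have h5 : 2 * (β * Real.logb 2 x + 2) ≤ 2 * Cc * x ^ ((1:ℝ)/8) := by nlinarith
      have h6 : 2 * Cc * x ^ ((1:ℝ)/8) ≤ x ^ ((7:ℝ)/8) * x ^ ((1:ℝ)/8) := by
        apply mul_le_mul_of_nonneg_right h78x (Real.rpow_nonneg hx0.le _)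
      have h7 : x ^ ((7:ℝ)/8) * x ^ ((1:ℝ)/8) = x := by
        rw [← Real.rpow_add hx0]; norm_num
      linarith
  have hnat : ∀ᶠ n : ℕ in Filter.atTop,
      64 * (β * Real.logb 2 (n:ℝ) + 2)^2 ≤ (n:ℝ) ^ ((1:ℝ)/2) ∧
      2 * (β * Real.logb 2 (n:ℝ) + 2) ≤ (n:ℝ) :=
    tendsto_natCast_atTop_atTop.eventually hreal
  have hα2 : ∀ᶠ n : ℕ in Filter.atTop, (2:ℝ) ≤ (n:ℝ) ^ α :=
    ((tendsto_rpow_atTop hα).comp tendsto_natCast_atTop_atTop).eventually_ge_atTop _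
  have hev : ∀ᶠ n : ℕ in Filter.atTop,
      (1:ℝ)/2 ≤ prob (fun X : Fin ⌈(n : ℝ) ^ α⌉₊ → Fin n → Bool =>
          eventH ⌈(n : ℝ) ^ α⌉₊ ⌈β * Real.logb 2 (n : ℝ)⌉₊ X) := by
    filter_upwards [hnat, hα2, Filter.eventually_ge_atTop 2] with n hn64 hna2 hn2
    obtain ⟨h64, hnL⟩ := hn64
    set m : ℕ := ⌈(n : ℝ) ^ α⌉₊ with hm
    set k : ℕ := ⌈β * Real.logb 2 (n:ℝ)⌉₊ with hk
    set K : ℕ := k + 1 with hK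
    set R : ℕ := m / 2 with hR
    set B : ℕ := n / K with hB
    have hn1R : (1:ℝ) ≤ (n:ℝ) := by exact_mod_cast Nat.one_le_of_lt hn2
    have hn0R : (0:ℝ) < (n:ℝ) := by linarith
    have hlogb0 : 0 ≤ Real.logb 2 (n:ℝ) := Real.logb_nonneg one_lt_two hn1R
    have hkR : (k:ℝ) < β * Real.logb 2 (n:ℝ) + 1 := by
      rw [hk]; exact Nat.ceil_lt_add_one (by positivity)
    set Lr : ℝ := β * Real.logb 2 (n:ℝ) + 2 with hLrd
    have hLr2 : 2 ≤ Lr := by rw [hLrd]; nlinarith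
    have hLrpos : (0:ℝ) < Lr := by linarith
    have hKLr : (K:ℝ) ≤ Lr := by rw [hK]; push_cast; rw [hLrd]; linarith
    have hmge : (n:ℝ)^α ≤ (m:ℝ) := Nat.le_ceil _
    have hm2 : 2 ≤ m := by
      have h1 : (2:ℝ) ≤ (m:ℝ) := le_trans hna2 hmge
      exact_mod_cast h1
    have hRge : (n:ℝ)^α / 4 ≤ (R:ℝ) := by
      have h1 : m ≤ 2*R + 1 := by omega
      have h1R : (m:ℝ) ≤ 2*(R:ℝ)+1 := by exact_mod_cast h1
      linarith
    have hK0 : 0 < K := by omega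
    have hnB : (n:ℝ) < (K:ℝ)*(B:ℝ) + (K:ℝ) := by
      have h1 : K * B + n % K = n := Nat.div_add_mod n K
      have h2 := Nat.mod_lt n hK0
      have h3 : n < K*B + K := by omega
      exact_mod_cast h3
    have hB0 : (0:ℝ) ≤ (B:ℝ) := Nat.cast_nonneg _
    have hBge : (n:ℝ)/(2*Lr) ≤ (B:ℝ) := by
      rw [div_le_iff₀ (by positivity)]
      have h4 : (K:ℝ)*(B:ℝ) ≤ Lr*(B:ℝ) := mul_le_mul_of_nonneg_right hKLr hB0
      nlinarith [hnL]
    have hQle : (2:ℝ)^K ≤ 4 * (n:ℝ)^β := by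
      have e0 : (2:ℝ)^(K:ℕ) = (2:ℝ) ^ ((K:ℕ):ℝ) := (Real.rpow_natCast 2 K).symm
      have e1 : (2:ℝ) ^ ((K:ℕ):ℝ) ≤ (2:ℝ) ^ (β * Real.logb 2 (n:ℝ) + 2) :=
        Real.rpow_le_rpow_of_exponent_le one_le_two (by rw [← hLrd]; exact hKLr)
      have e2 : (2:ℝ) ^ (β * Real.logb 2 (n:ℝ) + 2)
          = (2:ℝ)^(β * Real.logb 2 (n:ℝ)) * (2:ℝ)^(2:ℝ) := Real.rpow_add two_pos _ _
      have e3 : (2:ℝ) ^ (2:ℝ) = 4 := by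
        rw [Real.rpow_two]; norm_num
      have e4 : (2:ℝ) ^ (β * Real.logb 2 (n:ℝ)) = (n:ℝ)^β := by
        rw [mul_comm, Real.rpow_mul (by norm_num : (0:ℝ) ≤ 2),
          Real.rpow_logb two_pos (by norm_num) hn0R]
      rw [e0]
      calc (2:ℝ) ^ ((K:ℕ):ℝ) ≤ (2:ℝ) ^ (β * Real.logb 2 (n:ℝ) + 2) := e1
        _ = (n:ℝ)^β * 4 := by rw [e2, e3, e4]
        _ = 4 * (n:ℝ)^β := by ring
    have hexp : (1:ℝ)/2 ≤ α + 2 - β := by linarith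
    have h12 : (n:ℝ) ^ ((1:ℝ)/2) ≤ (n:ℝ)^(α+2-β) :=
      Real.rpow_le_rpow_of_exponent_le hn1R hexp
    have hLrX : 64 * Lr^2 ≤ (n:ℝ)^(α+2-β) := le_trans (by rw [hLrd]; exact h64) h12
    have hS : (2:ℝ)^K ≤ (R:ℝ) * (B:ℝ)^2 := by
      have key : 64 * Lr^2 * (n:ℝ)^β ≤ (n:ℝ)^α * (n:ℝ)^2 := by
        calc 64 * Lr^2 * (n:ℝ)^β ≤ (n:ℝ)^(α+2-β) * (n:ℝ)^β :=
              mul_le_mul_of_nonneg_right hLrX (Real.rpow_nonneg hn0R.le _)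
          _ = (n:ℝ)^α * (n:ℝ)^(2:ℝ) := by
              rw [← Real.rpow_add hn0R, ← Real.rpow_add hn0R]; ring_nf
          _ = (n:ℝ)^α * (n:ℝ)^2 := by
              rw [Real.rpow_two]
      have step1 : 4*(n:ℝ)^β ≤ (n:ℝ)^α/4 * ((n:ℝ)/(2*Lr))^2 := by
        have expand : (n:ℝ)^α/4 * ((n:ℝ)/(2*Lr))^2
            = ((n:ℝ)^α * (n:ℝ)^2) / (16*Lr^2) := by
          field_simp
          ring
        rw [expand, le_div_iff₀ (by positivity)]
        nlinarith [key]
      calc (2:ℝ)^K ≤ 4*(n:ℝ)^β := hQle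
        _ ≤ (n:ℝ)^α/4 * ((n:ℝ)/(2*Lr))^2 := step1
        _ ≤ (R:ℝ) * (B:ℝ)^2 := by
            apply mul_le_mul hRge (pow_le_pow_left₀ (by positivity) hBge 2)
              (by positivity) (Nat.cast_nonneg _)
    exact half_le_prob (m := m) (n := n) (k := k) (R := R) (B := B)
      (fun r => ⟨2*r.1, by have h9 := r.isLt; omega⟩)
      (fun r => ⟨2*r.1+1, by have h9 := r.isLt; omega⟩)
      (fun r => Nat.lt_succ_self (2*r.1))
      (fun r r' hrr => by
        have h9 : 2*r.1 = 2*r'.1+1 := congrArg Fin.val hrr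
        omega)
      (fun r r' hrr => by
        have h9 : 2*r.1 = 2*r'.1 := congrArg Fin.val hrr
        exact Fin.ext (by omega))
      (fun r r' hrr => by
        have h9 : 2*r.1+1 = 2*r'.1+1 := congrArg Fin.val hrr
        exact Fin.ext (by omega))
      (Nat.div_mul_le_self n K)
      hS
  have hcob : Filter.IsCoboundedUnder (· ≥ ·) Filter.atTop
      (fun n : ℕ => prob (fun X : Fin ⌈(n : ℝ) ^ α⌉₊ → Fin n → Bool =>
        eventH ⌈(n : ℝ) ^ α⌉₊ ⌈β * Real.logb 2 (n : ℝ)⌉₊ X)) :=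
    Filter.isCoboundedUnder_ge_of_le _ (fun n => prob_le_one _)
  exact Filter.le_liminf_of_le hcob (hev.mono fun n hn => le_trans (by norm_num) hn)
end

section
/- Fix integers n, m, k with 1 ≤ k < n and m ≥ 1. The probability of event C — that there exist indices i, j and a position a such that either x_i(1) = x_j(a) with (j,a) ≠ (i,1), or x_i(n−k+1) = x_j(a) with (j,a) ≠ (i,n−k+1) — is at most 2·m²·n·2^{−k}. -/
/-- Event C: the first `k`-mer (0-indexed position `0`) or the last `k`-mer
(0-indexed position `n - k`) of some string appears elsewhere in the family. -/
def eventC {n : ℕ} (m k : ℕ) (X : Fin m → Fin n → Bool) : Prop :=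
  ∃ i j : Fin m, ∃ a : ℕ, a + k ≤ n ∧
    ((kmer k (X i) 0 = kmer k (X j) a ∧ (j, a) ≠ (i, (0 : ℕ))) ∨
      (kmer k (X i) (n - k) = kmer k (X j) a ∧ (j, a) ≠ (i, n - k)))

lemma get_eq {n : ℕ} (x : Fin n → Bool) (t : ℕ) (h : t < n) : get x t = x ⟨t, h⟩ :=
  dif_pos h

lemma kmer_apply {n k : ℕ} (x : Fin n → Bool) (a : ℕ) (t : Fin k) (h : a + t.val < n) :
    kmer k x a t = x ⟨a + t.val, h⟩ := get_eq x _ h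

lemma agree_core {n m k : ℕ} {i j : Fin m} {p a : ℕ}
    (hp : p + k ≤ n) (ha : a + k ≤ n) (hlt : i ≠ j ∨ p < a)
    {X X' : Fin m → Fin n → Bool}
    (hE : kmer k (X i) p = kmer k (X j) a)
    (hE' : kmer k (X' i) p = kmer k (X' j) a)
    (hout : ∀ (b : Fin m) (q : Fin n), (b ≠ j ∨ q.val < a ∨ a + k ≤ q.val) → X b q = X' b q) :
    X = X' := by
  have key : ∀ s : ℕ, ∀ (b : Fin m) (q : Fin n), q.val = s → X b q = X' b q := by
    intro s
    induction s using Nat.strong_induction_on with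
    | _ s IH =>
      intro b q hq
      by_cases hb : b = j
      · by_cases hin : a ≤ q.val ∧ q.val < a + k
        · obtain ⟨h1, h2⟩ := hin
          have htk : q.val - a < k := by omega
          have hpt : p + (q.val - a) < n := by omega
          have hqeq : (⟨a + (q.val - a), by omega⟩ : Fin n) = q := by
            apply Fin.ext; simp; omega
          have e1 : X b q = X i ⟨p + (q.val - a), hpt⟩ := by
            have h := congrFun hE ⟨q.val - a, htk⟩
            rw [kmer_apply _ _ _ hpt, kmer_apply _ _ _ (show a + (⟨q.val - a, htk⟩ : Fin k).val < n by simp; omega)] at h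
            simp only at h
            rw [hqeq] at h
            rw [hb]; exact h.symm
          have e1' : X' b q = X' i ⟨p + (q.val - a), hpt⟩ := by
            have h := congrFun hE' ⟨q.val - a, htk⟩
            rw [kmer_apply _ _ _ hpt, kmer_apply _ _ _ (show a + (⟨q.val - a, htk⟩ : Fin k).val < n by simp; omega)] at h
            simp only at h
            rw [hqeq] at h
            rw [hb]; exact h.symm
          rw [e1, e1']
          rcases hlt with hij | hpa
          · exact hout i ⟨p + (q.val - a), hpt⟩ (Or.inl hij)
          · exact IH (p + (q.val - a)) (by omega) i ⟨p + (q.val - a), hpt⟩ rfl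
        · exact hout b q (Or.inr (by omega))
      · exact hout b q (Or.inl hb)
  funext b q; exact key q.val b q rfl

lemma card_kmer_eq {n m k : ℕ} (i j : Fin m) (p a : ℕ)
    (hp : p + k ≤ n) (ha : a + k ≤ n) (hlt : i ≠ j ∨ p < a) :
    Nat.card {X : Fin m → Fin n → Bool // kmer k (X i) p = kmer k (X j) a} * 2 ^ k
      ≤ 2 ^ (n * m) := by
  set E := fun X : Fin m → Fin n → Bool => kmer k (X i) p = kmer k (X j) a with hEdef
  let f : {X // E X} × (Fin k → Bool) → (Fin m → Fin n → Bool) :=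
    fun Z b q => if h : b = j ∧ a ≤ q.val ∧ q.val < a + k
      then Z.2 ⟨q.val - a, by omega⟩ else Z.1.1 b q
  have hinj : Function.Injective f := by
    rintro ⟨⟨X, hX⟩, y⟩ ⟨⟨X', hX'⟩, y'⟩ hf
    have hy : y = y' := by
      funext t
      have := congrFun (congrFun hf j) ⟨a + t.val, by omega⟩
      simp only [f, dif_pos (show j = j ∧ a ≤ a + t.val ∧ a + t.val < a + k by
        exact ⟨rfl, by omega, by omega⟩)] at this
      convert this using 2 <;> (apply Fin.ext; simp)
    have hXX : X = X' := by
      apply agree_core hp ha hlt hX hX'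
      intro b q hbq
      have h1 := congrFun (congrFun hf b) q
      have hneg : ¬(b = j ∧ a ≤ q.val ∧ q.val < a + k) := by
        rcases hbq with h | h | h
        · exact fun hc => h hc.1
        · exact fun hc => by omega
        · exact fun hc => by omega
      simp only [f, dif_neg hneg] at h1
      exact h1
    simp [hy, hXX]
  have hcard := Nat.card_le_card_of_injective f hinj
  rw [Nat.card_prod] at hcard
  have h1 : Nat.card (Fin k → Bool) = 2 ^ k := by simp [Nat.card_eq_fintype_card]
  have h2 : Nat.card (Fin m → Fin n → Bool) = 2 ^ (n * m) := by
    simp [Nat.card_eq_fintype_card, pow_mul]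
  rwa [h1, h2] at hcard

lemma card_pair_s9 {n m k : ℕ} (i j : Fin m) (p a : ℕ)
    (hp : p + k ≤ n) (ha : a + k ≤ n) :
    Nat.card {X : Fin m → Fin n → Bool //
        kmer k (X i) p = kmer k (X j) a ∧ (j, a) ≠ (i, p)} * 2 ^ k
      ≤ 2 ^ (n * m) := by
  by_cases h : (j, a) = (i, p)
  · have : IsEmpty {X : Fin m → Fin n → Bool //
        kmer k (X i) p = kmer k (X j) a ∧ (j, a) ≠ (i, p)} :=
      ⟨fun ⟨X, hX⟩ => hX.2 h⟩
    rw [Nat.card_of_isEmpty, Nat.zero_mul]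
    exact Nat.zero_le _
  · by_cases hor : i ≠ j ∨ p < a
    · refine le_trans (Nat.mul_le_mul_right _ ?_) (card_kmer_eq i j p a hp ha hor)
      refine Nat.card_le_card_of_injective (fun Z => ⟨Z.1, Z.2.1⟩) ?_
      intro Z Z' hZ
      apply Subtype.ext
      have h2 := congrArg Subtype.val hZ
      exact h2
    · push_neg at hor
      obtain ⟨hij, hpa⟩ := hor
      have hap : a < p := by
        rcases lt_or_ge a p with h1 | h1
        · exact h1
        · exfalso; apply h; rw [Prod.ext_iff] at *; constructor
          · exact hij.symm
          · simp at *; omega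
      refine le_trans (Nat.mul_le_mul_right _ ?_) (card_kmer_eq j i a p ha hp (Or.inr hap))
      refine Nat.card_le_card_of_injective (fun Z => ⟨Z.1, Z.2.1.symm⟩) ?_
      intro Z Z' hZ
      apply Subtype.ext
      have h2 := congrArg Subtype.val hZ
      exact h2

/-- The probability of event C is at most `2·m²·n·2^{-k}`. -/
theorem eventC_prob_bound
    (n m k : ℕ) (hk : 1 ≤ k) (hkn : k < n) (hm : 1 ≤ m) :
    prob (fun X : Fin m → Fin n → Bool => eventC m k X) ≤
      2 * (m : ℝ) ^ 2 * (n : ℝ) / 2 ^ k := by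
  classical
  set Ω := (Fin m → Fin n → Bool) with hΩ
  let pos : Bool → ℕ := fun s => if s then 0 else n - k
  let ι := Fin m × Fin m × Fin (n - k + 1) × Bool
  let F : ι → Ω → Prop := fun c X =>
    kmer k (X c.1) (pos c.2.2.2) = kmer k (X c.2.1) c.2.2.1.val ∧
      (c.2.1, (c.2.2.1.val : ℕ)) ≠ (c.1, pos c.2.2.2)
  have hsub : (Finset.univ.filter (fun X : Ω => eventC m k X)) ⊆
      Finset.univ.biUnion (fun c : ι => Finset.univ.filter (F c)) := by
    intro X hX
    simp only [Finset.mem_filter, Finset.mem_univ, true_and] at hX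
    obtain ⟨i, j, a, hak, hor⟩ := hX
    simp only [Finset.mem_biUnion, Finset.mem_filter, Finset.mem_univ, true_and]
    rcases hor with ⟨he, hne⟩ | ⟨he, hne⟩
    · refine ⟨(i, j, ⟨a, by omega⟩, true), ?_⟩
      simp only [F, pos, if_true]
      exact ⟨he, hne⟩
    · refine ⟨(i, j, ⟨a, by omega⟩, false), ?_⟩
      simp only [F, pos, if_false, Bool.false_eq_true]
      exact ⟨he, hne⟩
  have hfilt : ∀ c : ι, (Finset.univ.filter (F c)).card * 2 ^ k ≤ 2 ^ (n * m) := by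
    intro c
    have hc : (Finset.univ.filter (F c)).card = Nat.card {X : Ω // F c X} := by
      rw [Nat.card_eq_fintype_card, Fintype.card_subtype]
    rw [hc]
    have hp : pos c.2.2.2 + k ≤ n := by
      rcases c.2.2.2 with _ | _ <;> simp [pos] <;> omega
    have ha : c.2.2.1.val + k ≤ n := by have := c.2.2.1.isLt; omega
    exact card_pair_s9 c.1 c.2.1 (pos c.2.2.2) c.2.2.1.val hp ha
  set N := (Finset.univ.filter (fun X : Ω => eventC m k X)).card with hN
  have hcount : N * 2 ^ k ≤ (m * (m * ((n - k + 1) * 2))) * 2 ^ (n * m) := by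
    calc N * 2 ^ k
        ≤ (Finset.univ.biUnion (fun c : ι => Finset.univ.filter (F c))).card * 2 ^ k :=
          Nat.mul_le_mul_right _ (Finset.card_le_card hsub)
      _ ≤ (∑ c : ι, (Finset.univ.filter (F c)).card) * 2 ^ k :=
          Nat.mul_le_mul_right _ (Finset.card_biUnion_le)
      _ = ∑ c : ι, (Finset.univ.filter (F c)).card * 2 ^ k := by
          rw [Finset.sum_mul]
      _ ≤ ∑ _c : ι, 2 ^ (n * m) := Finset.sum_le_sum (fun c _ => hfilt c)
      _ = (m * (m * ((n - k + 1) * 2))) * 2 ^ (n * m) := by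
          rw [Finset.sum_const, Finset.card_univ]
          simp [ι, mul_comm, Nat.smul_one_eq_cast]
  have hcount2 : N * 2 ^ k ≤ (2 * m ^ 2 * n) * 2 ^ (n * m) := by
    refine le_trans hcount (Nat.mul_le_mul_right _ ?_)
    calc m * (m * ((n - k + 1) * 2)) = 2 * m ^ 2 * (n - k + 1) := by ring
      _ ≤ 2 * m ^ 2 * n := Nat.mul_le_mul_left _ (by omega)
  have hNcard : (Nat.card {X : Ω // eventC m k X} : ℝ) = (N : ℝ) := by
    rw [hN, Nat.card_eq_fintype_card, Fintype.card_subtype]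
  have hΩcard : (Fintype.card Ω : ℝ) = 2 ^ (n * m) := by
    show (Fintype.card (Fin m → Fin n → Bool) : ℝ) = 2 ^ (n * m)
    simp [pow_mul]
  rw [prob, hNcard, hΩcard]
  rw [div_le_div_iff₀ (by positivity) (by positivity)]
  have : ((N * 2 ^ k : ℕ) : ℝ) ≤ (((2 * m ^ 2 * n) * 2 ^ (n * m) : ℕ) : ℝ) := by
    exact_mod_cast hcount2
  push_cast at this
  nlinarith [this]
end

section
/- Fix integers n, m, k with 1 ≤ k < n and m ≥ 2. Let V be the number of triples (i, j, a) with 1 ≤ i < j ≤ m and 1 ≤ a ≤ n−k+1 such that x_i(a) = x_j(a). Then E[V²] ≤ m⁴·n²·2^{−2k} + 2·m²·n·k·2^{−k}. -/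
/-- `V`: the number of triples `(i, j, a)` with `i < j` and `x_i(a) = x_j(a)`
(0-indexed positions `a` with `a + k ≤ n`). -/
noncomputable def Vcount (n m k : ℕ) (X : Fin m → Fin n → Bool) : ℕ :=
  Nat.card {q : Fin m × Fin m × ℕ //
    q.1 < q.2.1 ∧ q.2.2 + k ≤ n ∧ kmer k (X q.1) q.2.2 = kmer k (X q.2.1) q.2.2}

/-- Expectation of a real-valued function under the uniform distribution on a
finite sample space. -/
noncomputable def expect {Ω : Type*} [Fintype Ω] (f : Ω → ℝ) : ℝ :=
  (∑ ω, f ω) / (Fintype.card Ω : ℝ)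

/-!
Write `V` as a sum of indicators over the triples `q = (i, j, a)`, so that `E[V²]` is a double
sum of `P(q and q' both match)`. Unless `q` and `q'` concern the same two strings with
overlapping windows, this probability is exactly `2^{-2k}`: either the windows are disjoint, so
`2k` coordinates of `x_j` must agree with `x_i`, or one string of `q'` is not involved in `q` and
conditioning on all other strings leaves probability `2^{-k}` for it to match. Each `q` has at
most `2k` overlapping partners, each contributing at most `P(q matches) = 2^{-k}`, and there are
at most `m²n` triples.
-/

section Agreement

open Finset Function

variable {ι β γ : Type*} [Fintype β] [DecidableEq β] [Fintype γ] [DecidableEq γ]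

theorem card_agreeOn_mul (A : Finset β) (v : β → γ) :
    #{u : β → γ | ∀ s ∈ A, u s = v s} * Fintype.card γ ^ #A =
      Fintype.card γ ^ Fintype.card β := by
  have hpi : ({u | ∀ s ∈ A, u s = v s} : Finset (β → γ)) =
      Fintype.piFinset fun s => if s ∈ A then {v s} else univ := by
    ext u
    simp only [mem_filter, mem_univ, true_and, Fintype.mem_piFinset]
    refine forall_congr' fun s => ?_
    split_ifs with hs <;> simp [hs]
  have outside : ∏ s ∈ Aᶜ, #(if s ∈ A then {v s} else univ) = Fintype.card γ ^ #Aᶜ := by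
    rw [← prod_const]
    exact prod_congr rfl fun s hs => by simp [mem_compl.1 hs]
  have inside : ∏ s ∈ A, #(if s ∈ A then {v s} else univ) = 1 :=
    prod_eq_one fun s hs => by simp [hs]
  rw [hpi, Fintype.card_piFinset, ← prod_compl_mul_prod A, outside, inside, mul_one, ← pow_add,
    card_compl_add_card]

/-- Once all rows but `c` are fixed, `P X` no longer depends on row `c`, and row `c` agrees
with row `d` on `A` for a `|γ|^{-|A|}` fraction of its values. -/
theorem card_filter_and_agreeOn_mul [Fintype ι] [DecidableEq ι] {c d : ι} (hdc : d ≠ c)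
    (A : Finset β) (P : (ι → β → γ) → Prop) [DecidablePred P]
    (hP : ∀ X u, P (update X c u) ↔ P X) :
    #{X | P X ∧ ∀ s ∈ A, X c s = X d s} * Fintype.card γ ^ #A = #{X | P X} := by
  set e := (Equiv.funSplitAt c (β → γ)).symm
  have he_c : ∀ u Y, e (u, Y) c = u := fun u Y => by simp [e]
  have he_d : ∀ u Y, e (u, Y) d = Y ⟨d, hdc⟩ := fun u Y => by simp [e, hdc]
  have he_update : ∀ u u' Y, e (u, Y) = update (e (u', Y)) c u := by
    intro u u' Y
    ext j : 1
    by_cases hj : j = c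
    · subst hj; simp [he_c]
    · simp [e, hj]
  have fiber : ∀ Y,
      (∑ u, if P (e (u, Y)) ∧ ∀ s ∈ A, e (u, Y) c s = e (u, Y) d s then 1 else 0) *
        Fintype.card γ ^ #A = ∑ u, if P (e (u, Y)) then 1 else 0 := by
    intro Y
    by_cases hY : ∀ u, P (e (u, Y))
    · simp only [hY, true_and, he_c, he_d, ← card_filter, sum_const, card_univ, smul_eq_mul,
        Fintype.card_fun, if_true, mul_one]
      exact card_agreeOn_mul A _
    · push Not at hY
      obtain ⟨u₀, hu₀⟩ := hY
      have hnot : ∀ u, ¬P (e (u, Y)) := fun u => by rwa [he_update u u₀, hP]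
      simp [hnot]
  simp only [card_filter, ← e.sum_comp, Fintype.sum_prod_type_right, sum_mul, fiber]

end Agreement

theorem exists_fresh_of_lt {α : Type*} [LinearOrder α] {i j i' j' : α} (h : i < j)
    (h' : i' < j') (hne : ¬(i' = i ∧ j' = j)) :
    ∃ c d, c ≠ i ∧ c ≠ j ∧ (c = i' ∧ d = j' ∨ c = j' ∧ d = i') := by
  by_cases hj' : j' = i ∨ j' = j
  · refine ⟨i', j', ?_, ?_, .inl ⟨rfl, rfl⟩⟩ <;> grind
  · exact ⟨j', i', by tauto, by tauto, .inr ⟨rfl, rfl⟩⟩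

section Kmers

open Finset

def kmerWindow (n k a : ℕ) : Finset (Fin n) := {s | a ≤ s ∧ (s : ℕ) < a + k}

theorem card_kmerWindow {n k a : ℕ} (h : a + k ≤ n) : #(kmerWindow n k a) = k := by
  have hval : (kmerWindow n k a).map Fin.valEmbedding = Ico a (a + k) := by
    ext t
    simp only [kmerWindow, mem_map, mem_filter, mem_univ, true_and, Fin.valEmbedding_apply,
      mem_Ico]
    exact ⟨fun ⟨s, hs, hst⟩ => hst ▸ hs, fun ht => ⟨⟨t, by omega⟩, ht, rfl⟩⟩
  rw [← card_map, hval, Nat.card_Ico, Nat.add_sub_cancel_left]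

theorem disjoint_kmerWindow {n k a a' : ℕ} (h : a + k ≤ a' ∨ a' + k ≤ a) :
    Disjoint (kmerWindow n k a) (kmerWindow n k a') := by
  simp only [kmerWindow, disjoint_left, mem_filter, mem_univ, true_and]
  omega

theorem get_val {n : ℕ} (x : Fin n → Bool) (s : Fin n) : _root_.get x s = x s := dif_pos s.2

theorem kmer_eq_kmer_iff {n k a : ℕ} (h : a + k ≤ n) {x y : Fin n → Bool} :
    kmer k x a = kmer k y a ↔ ∀ s ∈ kmerWindow n k a, x s = y s := by
  simp only [kmerWindow, mem_filter, mem_univ, true_and, funext_iff, kmer]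
  constructor
  · rintro hxy s ⟨has, hsa⟩
    simpa [Nat.add_sub_cancel' has, get_val] using hxy ⟨s - a, by omega⟩
  · intro hxy t
    have hst := hxy ⟨a + t, by omega⟩ (by simp)
    rwa [← get_val x, ← get_val y] at hst

abbrev KmerMatch {n m : ℕ} (k : ℕ) (X : Fin m → Fin n → Bool) (q : Fin m × Fin m × ℕ) :
    Prop :=
  kmer k (X q.1) q.2.2 = kmer k (X q.2.1) q.2.2

theorem kmerMatch_iff {n m k : ℕ} {X : Fin m → Fin n → Bool} {q : Fin m × Fin m × ℕ}
    (ha : q.2.2 + k ≤ n) :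
    KmerMatch k X q ↔ ∀ s ∈ kmerWindow n k q.2.2, X q.1 s = X q.2.1 s :=
  kmer_eq_kmer_iff ha

theorem kmerMatch_update {n m k : ℕ} {X : Fin m → Fin n → Bool} {q : Fin m × Fin m × ℕ}
    {c : Fin m} (hi : c ≠ q.1) (hj : c ≠ q.2.1) (u : Fin n → Bool) :
    KmerMatch k (Function.update X c u) q ↔ KmerMatch k X q := by
  rw [KmerMatch, Function.update_of_ne hi.symm, Function.update_of_ne hj.symm, KmerMatch]

end Kmers

namespace Vcount

open Finset

def triples (n m k : ℕ) : Finset (Fin m × Fin m × ℕ) :=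
  {q ∈ univ ×ˢ univ ×ˢ range (n + 1 - k) | q.1 < q.2.1}

theorem mem_triples {n m k : ℕ} {q : Fin m × Fin m × ℕ} :
    q ∈ triples n m k ↔ q.1 < q.2.1 ∧ q.2.2 + k ≤ n := by
  simp only [triples, mem_filter, mem_product, mem_univ, mem_range, true_and]
  omega

theorem card_triples_le {n m k : ℕ} (hk : 1 ≤ k) : #(triples n m k) ≤ m ^ 2 * n :=
  calc #(triples n m k)
      ≤ #(univ ×ˢ univ ×ˢ range (n + 1 - k) : Finset (Fin m × Fin m × ℕ)) :=
        card_filter_le _ _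
    _ ≤ m ^ 2 * n := by
        simp only [card_product, card_univ, Fintype.card_fin, card_range, sq, mul_assoc]
        gcongr
        omega

theorem eq_card_filter (n m k : ℕ) (X : Fin m → Fin n → Bool) :
    Vcount n m k X = #{q ∈ triples n m k | KmerMatch k X q} := by
  rw [Vcount, ← Nat.card_eq_finsetCard]
  refine Nat.card_congr (Equiv.subtypeEquivRight fun q => ?_)
  rw [mem_filter, mem_triples, and_assoc]

theorem sum_sq (n m k : ℕ) :
    ∑ X : Fin m → Fin n → Bool, Vcount n m k X ^ 2 =
      ∑ q ∈ triples n m k, ∑ q' ∈ triples n m k,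
        #{X : Fin m → Fin n → Bool | KmerMatch k X q ∧ KmerMatch k X q'} := by
  simp only [eq_card_filter, sum_filter, card_eq_sum_ones, sq, sum_mul_sum,
    ite_zero_mul_ite_zero, mul_one]
  rw [sum_comm]
  exact sum_congr rfl fun q _ => sum_comm

abbrev Overlap {m : ℕ} (k : ℕ) (q q' : Fin m × Fin m × ℕ) : Prop :=
  q'.1 = q.1 ∧ q'.2.1 = q.2.1 ∧ q'.2.2 < q.2.2 + k ∧ q.2.2 < q'.2.2 + k

variable {n m k : ℕ} {q q' : Fin m × Fin m × ℕ}

theorem card_kmerMatch_mul (hq : q ∈ triples n m k) :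
    #{X : Fin m → Fin n → Bool | KmerMatch k X q} * 2 ^ k =
      Fintype.card (Fin m → Fin n → Bool) := by
  obtain ⟨hij, ha⟩ := mem_triples.1 hq
  have h := card_filter_and_agreeOn_mul hij.ne' (kmerWindow n k q.2.2)
    (fun _ : Fin m → Fin n → Bool => True) fun _ _ => Iff.rfl
  simp only [true_and, filter_true, card_univ, Fintype.card_bool, card_kmerWindow ha] at h
  rw [← h, filter_congr fun X _ => kmerMatch_iff ha]

theorem card_kmerMatch_and_mul_of_not_overlap (hq : q ∈ triples n m k)
    (hq' : q' ∈ triples n m k) (hfar : ¬Overlap k q q') :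
    #{X : Fin m → Fin n → Bool | KmerMatch k X q ∧ KmerMatch k X q'} * 2 ^ (2 * k) =
      Fintype.card (Fin m → Fin n → Bool) := by
  obtain ⟨hij, ha⟩ := mem_triples.1 hq
  obtain ⟨hij', ha'⟩ := mem_triples.1 hq'
  by_cases hpair : q'.1 = q.1 ∧ q'.2.1 = q.2.1
  · have hdisj : Disjoint (kmerWindow n k q.2.2) (kmerWindow n k q'.2.2) :=
      disjoint_kmerWindow (by omega)
    have h := card_filter_and_agreeOn_mul hij.ne'
      (kmerWindow n k q.2.2 ∪ kmerWindow n k q'.2.2)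
      (fun _ : Fin m → Fin n → Bool => True) fun _ _ => Iff.rfl
    simp only [true_and, filter_true, card_univ, Fintype.card_bool, card_union_of_disjoint hdisj,
      card_kmerWindow ha, card_kmerWindow ha', ← two_mul] at h
    have hiff : ∀ X : Fin m → Fin n → Bool, KmerMatch k X q ∧ KmerMatch k X q' ↔
        ∀ s ∈ kmerWindow n k q.2.2 ∪ kmerWindow n k q'.2.2, X q.1 s = X q.2.1 s := fun X => by
      rw [kmerMatch_iff ha, kmerMatch_iff ha', hpair.1, hpair.2, forall_mem_union]
    rw [← h, filter_congr fun X _ => hiff X]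
  · obtain ⟨c, d, hci, hcj, hcd⟩ := exists_fresh_of_lt hij hij' hpair
    have hmatch' : ∀ X : Fin m → Fin n → Bool,
        KmerMatch k X q' ↔ ∀ s ∈ kmerWindow n k q'.2.2, X c s = X d s := by
      rcases hcd with ⟨rfl, rfl⟩ | ⟨rfl, rfl⟩ <;> intro X <;> rw [kmerMatch_iff ha']
      exact forall₂_congr fun _ _ => eq_comm
    have hdc : d ≠ c := by
      rcases hcd with ⟨rfl, rfl⟩ | ⟨rfl, rfl⟩ <;> simp [hij'.ne, hij'.ne']
    have h := card_filter_and_agreeOn_mul hdc (kmerWindow n k q'.2.2) (KmerMatch k · q)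
      fun X u => kmerMatch_update hci hcj u
    rw [card_kmerWindow ha', Fintype.card_bool] at h
    rw [filter_congr fun X _ => and_congr_right' (hmatch' X), two_mul, pow_add, ← mul_assoc,
      ← card_kmerMatch_mul hq]
    convert congrArg (· * 2 ^ k) h

theorem card_kmerMatch_and_mul_le (hq : q ∈ triples n m k) :
    #{X : Fin m → Fin n → Bool | KmerMatch k X q ∧ KmerMatch k X q'} * 2 ^ k ≤
      Fintype.card (Fin m → Fin n → Bool) :=
  card_kmerMatch_mul hq ▸ Nat.mul_le_mul_right _ (card_le_card (monotone_filter_right _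
    fun _ _ => And.left))

theorem card_overlap_le (q : Fin m × Fin m × ℕ) :
    #{q' ∈ triples n m k | Overlap k q q'} ≤ 2 * k :=
  calc #{q' ∈ triples n m k | Overlap k q q'}
      ≤ #((Ico (q.2.2 + 1 - k) (q.2.2 + k)).image fun a => (q.1, q.2.1, a)) := by
        refine card_le_card fun q' hq' => ?_
        obtain ⟨-, h1, h2, h3, h4⟩ := mem_filter.1 hq'
        exact mem_image.2 ⟨q'.2.2, mem_Ico.2 ⟨by omega, h3⟩, by rw [← h1, ← h2]⟩
    _ ≤ #(Ico (q.2.2 + 1 - k) (q.2.2 + k)) := card_image_le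
    _ ≤ 2 * k := by rw [Nat.card_Ico]; omega

theorem sum_card_kmerMatch_and_mul_le (hq : q ∈ triples n m k) :
    ∑ q' ∈ triples n m k,
        #{X : Fin m → Fin n → Bool | KmerMatch k X q ∧ KmerMatch k X q'} * 2 ^ (2 * k) ≤
      (#(triples n m k) + 2 * k * 2 ^ k) * Fintype.card (Fin m → Fin n → Bool) := by
  set N := Fintype.card (Fin m → Fin n → Bool)
  rw [← sum_filter_not_add_sum_filter _ (Overlap k q), add_mul]
  gcongr
  · calc _ = #{q' ∈ triples n m k | ¬Overlap k q q'} * N := by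
          refine sum_const_nat fun q' hq' => ?_
          obtain ⟨hq', hfar⟩ := mem_filter.1 hq'
          exact card_kmerMatch_and_mul_of_not_overlap hq hq' hfar
      _ ≤ #(triples n m k) * N := by gcongr; exact filter_subset _ _
  · calc _ ≤ #{q' ∈ triples n m k | Overlap k q q'} * (2 ^ k * N) := by
          refine (sum_le_card_nsmul _ _ _ fun q' _ => ?_).trans_eq (smul_eq_mul ..)
          rw [two_mul, pow_add, ← mul_assoc, mul_comm (2 ^ k)]
          exact Nat.mul_le_mul_right _ (card_kmerMatch_and_mul_le hq)
      _ ≤ 2 * k * (2 ^ k * N) := by gcongr; exact card_overlap_le q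
      _ = 2 * k * 2 ^ k * N := by ring

theorem sum_sq_mul_le :
    (∑ X : Fin m → Fin n → Bool, Vcount n m k X ^ 2) * 2 ^ (2 * k) ≤
      #(triples n m k) * (#(triples n m k) + 2 * k * 2 ^ k) *
        Fintype.card (Fin m → Fin n → Bool) := by
  rw [sum_sq, sum_mul, mul_assoc]
  refine (sum_le_card_nsmul _ _ _ fun q hq => ?_).trans_eq (smul_eq_mul ..)
  rw [sum_mul]
  exact sum_card_kmerMatch_and_mul_le hq

end Vcount

theorem Vcount_second_moment_general
    (n m k : ℕ) (hk : 1 ≤ k) :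
    expect (fun X : Fin m → Fin n → Bool => (Vcount n m k X : ℝ) ^ 2) ≤
      (m : ℝ) ^ 4 * (n : ℝ) ^ 2 / 2 ^ (2 * k) +
        2 * (m : ℝ) ^ 2 * (n : ℝ) * (k : ℝ) / 2 ^ k := by
  set N := Fintype.card (Fin m → Fin n → Bool)
  set t := (Vcount.triples n m k).card
  have hN : (0 : ℝ) < N := by exact_mod_cast Fintype.card_pos
  have hsum : (∑ X : Fin m → Fin n → Bool, (Vcount n m k X : ℝ) ^ 2) * 2 ^ (2 * k) ≤
      t * (t + 2 * k * 2 ^ k) * N := by exact_mod_cast Vcount.sum_sq_mul_le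
  have ht : (t : ℝ) ≤ m ^ 2 * n := by exact_mod_cast Vcount.card_triples_le hk
  calc expect (fun X : Fin m → Fin n → Bool => (Vcount n m k X : ℝ) ^ 2)
      ≤ t * (t + 2 * k * 2 ^ k) / 2 ^ (2 * k) := by
        rw [expect, div_le_div_iff₀ hN (by positivity)]
        linarith
    _ = (t : ℝ) ^ 2 / 2 ^ (2 * k) + 2 * t * k / 2 ^ k := by
        rw [pow_mul', sq (2 ^ k : ℝ)]
        field_simp
    _ ≤ ((m : ℝ) ^ 2 * n) ^ 2 / 2 ^ (2 * k) + 2 * ((m : ℝ) ^ 2 * n) * k / 2 ^ k := by gcongr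
    _ = _ := by ring

/-- `E[V²] ≤ m⁴·n²·2^{-2k} + 2·m²·n·k·2^{-k}`. -/
theorem Vcount_second_moment
    (n m k : ℕ) (hk : 1 ≤ k) (hkn : k < n) (hm : 2 ≤ m) :
    expect (fun X : Fin m → Fin n → Bool => (Vcount n m k X : ℝ) ^ 2) ≤
      (m : ℝ) ^ 4 * (n : ℝ) ^ 2 / 2 ^ (2 * k) +
        2 * (m : ℝ) ^ 2 * (n : ℝ) * (k : ℝ) / 2 ^ k :=
  Vcount_second_moment_general n m k hk
end
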